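/- There exists a constant K₂ > 0, depending only on α, γ, x₀, C₀, C* and ‖P₅‖, such that ∫₀^{∞} ‖P₅ Y(x;x₀)⁻¹‖ dx ≤ K₂; consequently, for every continuous bounded ḡ : [0,∞) → ℝⁿ the integral w := −∫₀^{∞} P₅ Y(x;x₀)⁻¹ ḡ(x) dx converges absolutely and ‖w‖ ≤ K₂ · sup_{x ≥ 0} ‖ḡ(x)‖. -/

import Mathlib

open MeasureTheory Set

/-!
Since `P₅ Q₋ = P₅ = P₅ P₊` and `Y(x₀; x₀) = E`, taking `x = x₀` in the dichotomy estimates gives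
`‖P₅ Y(s)⁻¹‖ ≤ ‖P₅‖ C₀ (x₀ / s)^{1-α}` on `(0, x₀]` and `‖P₅ Y(s)⁻¹‖ ≤ ‖P₅‖ C* e^{-γ(s - x₀)}`
on `[x₀, ∞)`. The first bound is integrable at `0` because `α > 0`, the second at `∞` because
`γ > 0`, so one may take `K₂ = ‖P₅‖ (C₀ x₀ / α + C* / γ) + 1`.
-/

theorem ContinuousOn.ring_inverse {X R : Type*} [TopologicalSpace X] [NormedRing R]
    [HasSummableGeomSeries R] {f : X → R} {s : Set X} (hf : ContinuousOn f s)
    (hu : ∀ x ∈ s, IsUnit (f x)) : ContinuousOn (fun x => Ring.inverse (f x)) s := by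
  intro x hx
  obtain ⟨u, hu⟩ := hu x hx
  exact (hu ▸ NormedRing.inverse_continuousAt u).comp_continuousWithinAt (hf x hx)

theorem ContinuousLinearMap.opNorm_comp_le_of_comp_eq {𝕜 E : Type*} [NontriviallyNormedField 𝕜]
    [NormedAddCommGroup E] [NormedSpace 𝕜 E] {P Q : E →L[𝕜] E} (h : P ∘L Q = P)
    (T : E →L[𝕜] E) : ‖P ∘L T‖ ≤ ‖P‖ * ‖Q ∘L T‖ :=
  calc ‖P ∘L T‖ = ‖P ∘L (Q ∘L T)‖ := by rw [← comp_assoc, h]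
    _ ≤ ‖P‖ * ‖Q ∘L T‖ := opNorm_comp_le _ _

section Kernels

variable {a α γ : ℝ}

theorem div_rpow_one_sub_eq (ha : 0 ≤ a) {s : ℝ} (hs : 0 < s) :
    (a / s) ^ (1 - α) = a ^ (1 - α) * s ^ (α - 1) := by
  rw [Real.div_rpow ha hs.le, div_eq_mul_inv, ← Real.rpow_neg hs.le, neg_sub]

theorem integrableOn_Ioc_div_rpow_one_sub (ha : 0 ≤ a) (hα : 0 < α) :
    IntegrableOn (fun s => (a / s) ^ (1 - α)) (Ioc 0 a) := by
  have h : IntegrableOn (fun s => a ^ (1 - α) * s ^ (α - 1)) (Ioc 0 a) :=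
    ((intervalIntegral.intervalIntegrable_rpow' (by linarith)).1).const_mul _
  exact h.congr_fun (fun s hs => (div_rpow_one_sub_eq ha hs.1).symm) measurableSet_Ioc

theorem integral_Ioc_div_rpow_one_sub (ha : 0 ≤ a) (hα : 0 < α) :
    ∫ s in Ioc 0 a, (a / s) ^ (1 - α) = a / α := by
  rw [setIntegral_congr_fun measurableSet_Ioc (fun s hs => div_rpow_one_sub_eq ha hs.1),
    integral_const_mul, ← intervalIntegral.integral_of_le ha,
    integral_rpow (Or.inl (by linarith)), sub_add_cancel, Real.zero_rpow hα.ne', sub_zero,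
    mul_div_assoc', ← Real.rpow_add' ha (by simp), sub_add_cancel, Real.rpow_one]

theorem exp_neg_mul_sub_eq (γ a s : ℝ) :
    Real.exp (-(γ * (s - a))) = Real.exp (γ * a) * Real.exp (-γ * s) := by
  rw [← Real.exp_add]; ring_nf

theorem integrableOn_Ioi_exp_neg_mul_sub (hγ : 0 < γ) (a : ℝ) :
    IntegrableOn (fun s => Real.exp (-(γ * (s - a)))) (Ioi a) := by
  simp only [exp_neg_mul_sub_eq γ a]
  exact (integrableOn_exp_mul_Ioi (neg_neg_of_pos hγ) a).const_mul _

theorem integral_Ioi_exp_neg_mul_sub (hγ : 0 < γ) (a : ℝ) :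
    ∫ s in Ioi a, Real.exp (-(γ * (s - a))) = γ⁻¹ := by
  simp only [exp_neg_mul_sub_eq γ a]
  rw [integral_const_mul, integral_exp_mul_Ioi (neg_neg_of_pos hγ), neg_mul, Real.exp_neg]
  field_simp

end Kernels

section Dichotomy

variable {E : Type*} [NormedAddCommGroup E] {f : ℝ → E} {a α γ C D : ℝ}

theorem integrableOn_Ioc_of_norm_le_div_rpow (ha : 0 ≤ a) (hα : 0 < α)
    (hf : AEStronglyMeasurable f (volume.restrict (Ioc 0 a)))
    (hnear : ∀ s ∈ Ioc 0 a, ‖f s‖ ≤ C * (a / s) ^ (1 - α)) :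
    IntegrableOn f (Ioc 0 a) :=
  ((integrableOn_Ioc_div_rpow_one_sub ha hα).const_mul C).mono' hf
    (ae_restrict_of_forall_mem measurableSet_Ioc hnear)

theorem integrableOn_Ioi_of_norm_le_exp (hγ : 0 < γ)
    (hf : AEStronglyMeasurable f (volume.restrict (Ioi a)))
    (hfar : ∀ s ∈ Ioi a, ‖f s‖ ≤ D * Real.exp (-(γ * (s - a)))) :
    IntegrableOn f (Ioi a) :=
  ((integrableOn_Ioi_exp_neg_mul_sub hγ a).const_mul D).mono' hf
    (ae_restrict_of_forall_mem measurableSet_Ioi hfar)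

theorem integrableOn_Ioc_Ioi_of_norm_le_div_rpow_of_norm_le_exp
    (ha : 0 ≤ a) (hα : 0 < α) (hγ : 0 < γ)
    (hf : ContinuousOn f (Ioi 0))
    (hnear : ∀ s ∈ Ioc 0 a, ‖f s‖ ≤ C * (a / s) ^ (1 - α))
    (hfar : ∀ s ∈ Ioi a, ‖f s‖ ≤ D * Real.exp (-(γ * (s - a)))) :
    IntegrableOn f (Ioc 0 a) ∧ IntegrableOn f (Ioi a) :=
  ⟨integrableOn_Ioc_of_norm_le_div_rpow ha hα
      ((hf.mono Ioc_subset_Ioi_self).aestronglyMeasurable measurableSet_Ioc) hnear,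
    integrableOn_Ioi_of_norm_le_exp hγ
      ((hf.mono (Ioi_subset_Ioi ha)).aestronglyMeasurable measurableSet_Ioi) hfar⟩

theorem integrableOn_Ioi_of_norm_le_div_rpow_of_norm_le_exp
    (ha : 0 ≤ a) (hα : 0 < α) (hγ : 0 < γ)
    (hf : ContinuousOn f (Ioi 0))
    (hnear : ∀ s ∈ Ioc 0 a, ‖f s‖ ≤ C * (a / s) ^ (1 - α))
    (hfar : ∀ s ∈ Ioi a, ‖f s‖ ≤ D * Real.exp (-(γ * (s - a)))) :
    IntegrableOn f (Ioi 0) := by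
  obtain ⟨hint_near, hint_far⟩ :=
    integrableOn_Ioc_Ioi_of_norm_le_div_rpow_of_norm_le_exp ha hα hγ hf hnear hfar
  exact Ioc_union_Ioi_eq_Ioi ha ▸ hint_near.union hint_far

theorem integral_norm_Ioi_le_of_norm_le_div_rpow_of_norm_le_exp
    (ha : 0 ≤ a) (hα : 0 < α) (hγ : 0 < γ)
    (hf : ContinuousOn f (Ioi 0))
    (hnear : ∀ s ∈ Ioc 0 a, ‖f s‖ ≤ C * (a / s) ^ (1 - α))
    (hfar : ∀ s ∈ Ioi a, ‖f s‖ ≤ D * Real.exp (-(γ * (s - a)))) :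
    ∫ s in Ioi 0, ‖f s‖ ≤ C * (a / α) + D * γ⁻¹ := by
  obtain ⟨hint_near, hint_far⟩ :=
    integrableOn_Ioc_Ioi_of_norm_le_div_rpow_of_norm_le_exp ha hα hγ hf hnear hfar
  rw [← Ioc_union_Ioi_eq_Ioi ha, setIntegral_union (Ioc_disjoint_Ioi le_rfl) measurableSet_Ioi
    hint_near.norm hint_far.norm]
  gcongr
  · calc ∫ s in Ioc 0 a, ‖f s‖ ≤ ∫ s in Ioc 0 a, C * (a / s) ^ (1 - α) :=
          setIntegral_mono_on hint_near.norm
            ((integrableOn_Ioc_div_rpow_one_sub ha hα).const_mul C) measurableSet_Ioc hnear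
      _ = C * (a / α) := by rw [integral_const_mul, integral_Ioc_div_rpow_one_sub ha hα]
  · calc ∫ s in Ioi a, ‖f s‖ ≤ ∫ s in Ioi a, D * Real.exp (-(γ * (s - a))) :=
          setIntegral_mono_on hint_far.norm
            ((integrableOn_Ioi_exp_neg_mul_sub hγ a).const_mul D) measurableSet_Ioi hfar
      _ = D * γ⁻¹ := by rw [integral_const_mul, integral_Ioi_exp_neg_mul_sub hγ]

end Dichotomy

section ApplyBounded

variable {X E F : Type*} [MeasurableSpace X] {μ : Measure X} [NormedAddCommGroup E]
  [NormedSpace ℝ E] [NormedAddCommGroup F] [NormedSpace ℝ F] {L : X → E →L[ℝ] F} {g : X → E}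
  {M : ℝ}

theorem MeasureTheory.Integrable.clm_apply_of_norm_le (hL : Integrable L μ)
    (hg : AEStronglyMeasurable g μ) (hgM : ∀ᵐ x ∂μ, ‖g x‖ ≤ M) :
    Integrable (fun x => L x (g x)) μ :=
  (hL.norm.mul_const M).mono'
    ((ContinuousLinearMap.id ℝ (E →L[ℝ] F)).aestronglyMeasurable_comp₂
      hL.aestronglyMeasurable hg)
    (hgM.mono fun x hx => (L x).le_of_opNorm_le_of_le le_rfl hx)

theorem norm_integral_clm_apply_le (hL : Integrable L μ) (hgM : ∀ᵐ x ∂μ, ‖g x‖ ≤ M) :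
    ‖∫ x, L x (g x) ∂μ‖ ≤ (∫ x, ‖L x‖ ∂μ) * M := by
  rw [← integral_mul_const]
  exact norm_integral_le_of_norm_le (hL.norm.mul_const M)
    (hgM.mono fun x hx => (L x).le_of_opNorm_le_of_le le_rfl hx)

end ApplyBounded

theorem P5_row_integrable_general (n : ℕ)
    (A : EuclideanSpace ℝ (Fin n) →L[ℝ] EuclideanSpace ℝ (Fin n))
    (B : ℝ → EuclideanSpace ℝ (Fin n) →L[ℝ] EuclideanSpace ℝ (Fin n))
    (x₀ : ℝ) (hx₀ : 0 < x₀)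
    (Y : ℝ → EuclideanSpace ℝ (Fin n) →L[ℝ] EuclideanSpace ℝ (Fin n))
    (hYd : ∀ x > (0 : ℝ), HasDerivAt Y ((x⁻¹ • A + B x) ∘L Y x) x)
    (hYx₀ : Y x₀ = 1) (hYu : ∀ x > (0 : ℝ), IsUnit (Y x))
    (P₁ P₂ P₃ P₄ P₅ P₆ : EuclideanSpace ℝ (Fin n) →L[ℝ] EuclideanSpace ℝ (Fin n))
    (hidem : ∀ i, ![P₁, P₂, P₃, P₄, P₅, P₆] i ∘L ![P₁, P₂, P₃, P₄, P₅, P₆] i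
      = ![P₁, P₂, P₃, P₄, P₅, P₆] i)
    (hdisj : ∀ i j, i ≠ j →
      ![P₁, P₂, P₃, P₄, P₅, P₆] i ∘L ![P₁, P₂, P₃, P₄, P₅, P₆] j = 0)
    (C₀ α : ℝ) (hC₀ : 0 < C₀) (hα : 0 < α)
    (hQm : ∀ x s : ℝ, 0 < s → s ≤ x → x ≤ x₀ →
      ‖Y x ∘L (P₂ + P₃ + P₅ + P₆) ∘L Ring.inverse (Y s)‖ ≤ C₀ * (x / s) ^ (1 - α))
    (Cs γ : ℝ) (hCs : 0 < Cs) (hγ : 0 < γ)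
    (hPp : ∀ x s : ℝ, x₀ ≤ x → x ≤ s →
      ‖Y x ∘L (P₄ + P₅ + P₆) ∘L Ring.inverse (Y s)‖ ≤ Cs * Real.exp (-(γ * (s - x)))) :
    ∃ K₂ > (0 : ℝ),
      IntegrableOn (fun x => ‖P₅ ∘L Ring.inverse (Y x)‖) (Set.Ioi 0) ∧
      (∫ x in Set.Ioi (0 : ℝ), ‖P₅ ∘L Ring.inverse (Y x)‖) ≤ K₂ ∧
      ∀ g : ℝ → EuclideanSpace ℝ (Fin n), ∀ mg : ℝ,
        ContinuousOn g (Set.Ici 0) →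
        (∀ x ≥ (0 : ℝ), ‖g x‖ ≤ mg) →
        IntegrableOn (fun x => (P₅ ∘L Ring.inverse (Y x)) (g x)) (Set.Ioi 0) ∧
        ‖-∫ x in Set.Ioi (0 : ℝ), (P₅ ∘L Ring.inverse (Y x)) (g x)‖ ≤ K₂ * mg := by
  have h₅₅ : P₅ ∘L P₅ = P₅ := hidem 4
  have h₅₂ : P₅ ∘L P₂ = 0 := hdisj 4 1 (by decide)
  have h₅₃ : P₅ ∘L P₃ = 0 := hdisj 4 2 (by decide)
  have h₅₄ : P₅ ∘L P₄ = 0 := hdisj 4 3 (by decide)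
  have h₅₆ : P₅ ∘L P₆ = 0 := hdisj 4 5 (by decide)
  have hP₅Qm : P₅ ∘L (P₂ + P₃ + P₅ + P₆) = P₅ := by
    simp only [ContinuousLinearMap.comp_add, h₅₅, h₅₂, h₅₃, h₅₆, zero_add, add_zero]
  have hP₅Pp : P₅ ∘L (P₄ + P₅ + P₆) = P₅ := by
    simp only [ContinuousLinearMap.comp_add, h₅₅, h₅₄, h₅₆, zero_add, add_zero]
  have hcont : ContinuousOn (fun x => P₅ ∘L Ring.inverse (Y x)) (Ioi 0) :=
    continuousOn_const.clm_comp (ContinuousOn.ring_inverse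
      (fun x hx => (hYd x hx).continuousAt.continuousWithinAt) hYu)
  have hnear : ∀ s ∈ Ioc 0 x₀,
      ‖P₅ ∘L Ring.inverse (Y s)‖ ≤ ‖P₅‖ * C₀ * (x₀ / s) ^ (1 - α) := fun s hs => by
    have := hQm x₀ s hs.1 hs.2 le_rfl
    rw [hYx₀, ContinuousLinearMap.one_def, ContinuousLinearMap.id_comp] at this
    grw [ContinuousLinearMap.opNorm_comp_le_of_comp_eq hP₅Qm, this, mul_assoc]
  have hfar : ∀ s ∈ Ioi x₀,
      ‖P₅ ∘L Ring.inverse (Y s)‖ ≤ ‖P₅‖ * Cs * Real.exp (-(γ * (s - x₀))) := fun s hs => by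
    have := hPp x₀ s le_rfl hs.le
    rw [hYx₀, ContinuousLinearMap.one_def, ContinuousLinearMap.id_comp] at this
    grw [ContinuousLinearMap.opNorm_comp_le_of_comp_eq hP₅Pp, this, mul_assoc]
  have hint := integrableOn_Ioi_of_norm_le_div_rpow_of_norm_le_exp hx₀.le hα hγ hcont hnear hfar
  have hbound :=
    integral_norm_Ioi_le_of_norm_le_div_rpow_of_norm_le_exp hx₀.le hα hγ hcont hnear hfar
  obtain ⟨K₂, hK₂, hK⟩ : ∃ K₂ > (0 : ℝ), ∫ x in Ioi 0, ‖P₅ ∘L Ring.inverse (Y x)‖ ≤ K₂ :=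
    ⟨‖P₅‖ * C₀ * (x₀ / α) + ‖P₅‖ * Cs * γ⁻¹ + 1, by positivity,
      hbound.trans (le_add_of_nonneg_right zero_le_one)⟩
  refine ⟨K₂, hK₂, hint.norm, hK, fun g mg hg hgM => ?_⟩
  have hgM' : ∀ᵐ x ∂(volume.restrict (Ioi 0)), ‖g x‖ ≤ mg :=
    ae_restrict_of_forall_mem measurableSet_Ioi fun x hx => hgM x hx.le
  refine ⟨hint.clm_apply_of_norm_le
    ((hg.mono Ioi_subset_Ici_self).aestronglyMeasurable measurableSet_Ioi) hgM', ?_⟩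
  rw [norm_neg]
  exact (norm_integral_clm_apply_le hint hgM').trans
    (mul_le_mul_of_nonneg_right hK ((norm_nonneg _).trans (hgM 0 le_rfl)))

/-- `∫₀^∞ ‖P₅ Y(x;x₀)⁻¹‖ dx ≤ K₂ < ∞`; hence for every continuous
bounded `ḡ` the integral `w = −∫₀^∞ P₅ Y(x;x₀)⁻¹ ḡ(x) dx` converges absolutely and
`‖w‖ ≤ K₂ sup ‖ḡ‖`. -/
theorem P5_row_integrable (n : ℕ)
    (A : EuclideanSpace ℝ (Fin n) →L[ℝ] EuclideanSpace ℝ (Fin n))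
    (B : ℝ → EuclideanSpace ℝ (Fin n) →L[ℝ] EuclideanSpace ℝ (Fin n))
    (hBcont : ContinuousOn B (Set.Ioi 0)) (hBbdd : ∃ M, ∀ x > (0 : ℝ), ‖B x‖ ≤ M)
    (x₀ : ℝ) (hx₀ : 0 < x₀)
    (Y : ℝ → EuclideanSpace ℝ (Fin n) →L[ℝ] EuclideanSpace ℝ (Fin n))
    (hYd : ∀ x > (0 : ℝ), HasDerivAt Y ((x⁻¹ • A + B x) ∘L Y x) x)
    (hYx₀ : Y x₀ = 1) (hYu : ∀ x > (0 : ℝ), IsUnit (Y x))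
    (P₁ P₂ P₃ P₄ P₅ P₆ : EuclideanSpace ℝ (Fin n) →L[ℝ] EuclideanSpace ℝ (Fin n))
    (hsum : P₁ + P₂ + P₃ + P₄ + P₅ + P₆ = 1)
    (hidem : ∀ i, ![P₁, P₂, P₃, P₄, P₅, P₆] i ∘L ![P₁, P₂, P₃, P₄, P₅, P₆] i
      = ![P₁, P₂, P₃, P₄, P₅, P₆] i)
    (hdisj : ∀ i j, i ≠ j →
      ![P₁, P₂, P₃, P₄, P₅, P₆] i ∘L ![P₁, P₂, P₃, P₄, P₅, P₆] j = 0)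
    (C₀ α : ℝ) (hC₀ : 0 < C₀) (hα : 0 < α)
    (hQp : ∀ x s : ℝ, 0 < x → x ≤ s → s ≤ x₀ →
      ‖Y x ∘L (P₁ + P₄) ∘L Ring.inverse (Y s)‖ ≤ C₀ * (x / s) ^ (1 + α))
    (hQm : ∀ x s : ℝ, 0 < s → s ≤ x → x ≤ x₀ →
      ‖Y x ∘L (P₂ + P₃ + P₅ + P₆) ∘L Ring.inverse (Y s)‖ ≤ C₀ * (x / s) ^ (1 - α))
    (Cs γ : ℝ) (hCs : 0 < Cs) (hγ : 0 < γ)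
    (hPm : ∀ x s : ℝ, x₀ ≤ s → s ≤ x →
      ‖Y x ∘L (P₁ + P₂ + P₃) ∘L Ring.inverse (Y s)‖ ≤ Cs * Real.exp (-(γ * (x - s))))
    (hPp : ∀ x s : ℝ, x₀ ≤ x → x ≤ s →
      ‖Y x ∘L (P₄ + P₅ + P₆) ∘L Ring.inverse (Y s)‖ ≤ Cs * Real.exp (-(γ * (s - x)))) :
    ∃ K₂ > (0 : ℝ),
      IntegrableOn (fun x => ‖P₅ ∘L Ring.inverse (Y x)‖) (Set.Ioi 0) ∧
      (∫ x in Set.Ioi (0 : ℝ), ‖P₅ ∘L Ring.inverse (Y x)‖) ≤ K₂ ∧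
      ∀ g : ℝ → EuclideanSpace ℝ (Fin n), ∀ mg : ℝ,
        ContinuousOn g (Set.Ici 0) →
        (∀ x ≥ (0 : ℝ), ‖g x‖ ≤ mg) →
        IntegrableOn (fun x => (P₅ ∘L Ring.inverse (Y x)) (g x)) (Set.Ioi 0) ∧
        ‖-∫ x in Set.Ioi (0 : ℝ), (P₅ ∘L Ring.inverse (Y x)) (g x)‖ ≤ K₂ * mg :=
  P5_row_integrable_general n A B x₀ hx₀ Y hYd hYx₀ hYu P₁ P₂ P₃ P₄ P₅ P₆ hidem hdisj C₀ α hC₀ hα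
    hQm Cs γ hCs hγ hPp
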